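/- If 0 < α < −β − 1, then for every integer ℓ with 0 ≤ ℓ ≤ K, where K is the largest positive integer such that K(−a − b − c) ≤ −b − 1, the vector −ℓ·(a + c, c)ᵀ is a periodic point of Φ; in particular, the attractor 𝒜_Φ contains {(0,0)ᵀ, −(a + c, c)ᵀ, …, −K(a + c, c)ᵀ}. -/

import Mathlib

open Matrix Polynomial

noncomputable section

/-- `ℤ²[A]`: the smallest `A`-invariant `ℤ`-module containing `ℤ²`. -/
def intSpan {n : ℕ} (A : Matrix (Fin n) (Fin n) ℚ) : Set (Fin n → ℚ) :=
  {x | ∃ (k : ℕ) (v : ℕ → Fin n → ℤ),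
    x = ∑ j ∈ Finset.range (k + 1), (A ^ j).mulVec (fun i => ((v j i : ℚ)))}

/-- The digit vector `(ν, 0)ᵀ`. -/
def digitVec (ν : ℤ) : Fin 2 → ℚ := ![(ν : ℚ), 0]

/-!
Since `A e₁ = e₂`, every element of `ℤ²[A]` is `F(A) e₁` for an integer polynomial `F`, and
`h(A) e₁ = 0` forces `p ∣ h` because `p(A) = 0` and `e₁, A e₁` are independent. So if
`A z = (μ, 0)ᵀ` with `z = F(A) e₁`, then `p ∣ X F - μ` over `ℚ`; Gauss's lemma for the primitive
`q = c p` makes this a divisibility in `ℤ[X]`, and evaluating at `0` gives `b ∣ μ`. Hence an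
expansion `x = d + A y` with `d ∈ 𝒟`, `y ∈ ℤ²[A]` is unique. Finally
`-ℓ(a + c, c)ᵀ = (ℓ(-a - b - c), 0)ᵀ + A(-ℓ(a + c, c)ᵀ)`, and `0 ≤ ℓ(-a - b - c) ≤ -b - 1`
for `0 ≤ ℓ ≤ K`, so these vectors are fixed by `Φ`.
-/

theorem intCast_mem_intSpan {n : ℕ} (A : Matrix (Fin n) (Fin n) ℚ) (v : Fin n → ℤ) :
    (fun i => (v i : ℚ)) ∈ intSpan A :=
  ⟨0, fun _ => v, by simp⟩

theorem exists_aeval_mulVec_of_mem_intSpan {n : ℕ} {A : Matrix (Fin n) (Fin n) ℚ} {e : Fin n → ℚ}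
    (hgen : ∀ v : Fin n → ℤ, ∃ g : ℤ[X], (fun i => (v i : ℚ)) = aeval A g *ᵥ e)
    {x : Fin n → ℚ} (hx : x ∈ intSpan A) : ∃ F : ℤ[X], x = aeval A F *ᵥ e := by
  obtain ⟨k, v, rfl⟩ := hx
  choose g hg using hgen
  refine ⟨∑ j ∈ Finset.range (k + 1), X ^ j * g (v j), ?_⟩
  simp only [map_sum, map_mul, map_pow, aeval_X, Matrix.sum_mulVec, ← Matrix.mulVec_mulVec, ← hg]

theorem isPrimitive_of_gcd_eq_one {c a b : ℤ} (h : Int.gcd c (Int.gcd a b) = 1) :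
    (C c * X ^ 2 + C a * X + C b).IsPrimitive := by
  refine isPrimitive_iff_isUnit_of_C_dvd.mpr fun r hr => ?_
  rw [C_dvd_iff_dvd_coeff] at hr
  have hc := hr 2
  have ha := hr 1
  have hb := hr 0
  simp only [coeff_add, coeff_C_mul, coeff_X_pow, coeff_X, coeff_C] at hc ha hb
  norm_num at hc ha hb
  refine Int.isUnit_iff_natAbs_eq.mpr (Nat.dvd_one.mp (h ▸ Nat.dvd_gcd ?_ (Nat.dvd_gcd ?_ ?_))) <;>
    exact Int.natAbs_dvd_natAbs.mpr ‹_›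

section Companion

variable {R : Type*} [CommRing R] (α β : R)

theorem companion_aeval_self :
    aeval !![0, -β; 1, -α] (X ^ 2 + C α * X + C β) = 0 := by
  ext i j
  fin_cases i <;> fin_cases j <;>
    simp [sq, Matrix.mul_apply, Fin.sum_univ_two, Matrix.algebraMap_eq_diagonal]
  ring

theorem companion_aeval_linear_mulVec (r₀ r₁ : R) :
    aeval !![0, -β; 1, -α] (C r₁ * X + C r₀) *ᵥ ![1, 0] = ![r₀, r₁] := by
  ext i
  fin_cases i <;>
    simp [Matrix.algebraMap_eq_diagonal, Matrix.mulVec, dotProduct, Fin.sum_univ_two]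

theorem dvd_of_companion_aeval_mulVec_eq_zero [Nontrivial R] {h : R[X]}
    (hh : aeval !![0, -β; 1, -α] h *ᵥ ![1, 0] = 0) : X ^ 2 + C α * X + C β ∣ h := by
  have hmonic : (X ^ 2 + C α * X + C β).Monic := by monicity!
  have hdeg : (X ^ 2 + C α * X + C β).degree = 2 := by compute_degree!
  set P : R[X] := X ^ 2 + C α * X + C β
  set r := h %ₘ P
  have hr : r = C (r.coeff 1) * X + C (r.coeff 0) := by
    have := degree_modByMonic_lt h hmonic
    rw [hdeg] at this
    exact eq_X_add_C_of_degree_le_one (Order.le_of_lt_succ this)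
  have hr_aeval : aeval !![0, -β; 1, -α] h = aeval !![0, -β; 1, -α] r := by
    rw [← modByMonic_add_div h P, map_add, map_mul, companion_aeval_self, zero_mul, add_zero]
  rw [hr_aeval, hr, companion_aeval_linear_mulVec] at hh
  suffices r = 0 from (modByMonic_eq_zero_iff_dvd hmonic).mp this
  rw [hr, show r.coeff 0 = 0 from congrFun hh 0, show r.coeff 1 = 0 from congrFun hh 1]
  simp

end Companion

theorem exists_aeval_mulVec_of_mem_companion_intSpan {α β : ℚ} {x : Fin 2 → ℚ}
    (hx : x ∈ intSpan !![0, -β; 1, -α]) :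
    ∃ F : ℤ[X], x = aeval !![0, -β; 1, -α] F *ᵥ ![1, 0] := by
  refine exists_aeval_mulVec_of_mem_intSpan (fun v => ⟨C (v 1) * X + C (v 0), ?_⟩) hx
  rw [← aeval_map_algebraMap ℚ]
  simp only [Polynomial.map_add, Polynomial.map_mul, Polynomial.map_C, Polynomial.map_X,
    algebraMap_int_eq, Int.coe_castRingHom, companion_aeval_linear_mulVec]
  ext i
  fin_cases i <;> rfl

theorem dvd_of_companion_mulVec_eq_digitVec {α β : ℚ} {c a b : ℤ} (hc : c ≠ 0)
    (ha : (a : ℚ) = c * α) (hb : (b : ℚ) = c * β) (hprim : Int.gcd c (Int.gcd a b) = 1)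
    {F : ℤ[X]} {μ : ℤ}
    (hF : !![0, -β; 1, -α] *ᵥ (aeval !![0, -β; 1, -α] F *ᵥ ![1, 0]) = digitVec μ) : b ∣ μ := by
  have hP : X ^ 2 + C α * X + C β ∣ (X * F - C μ).map (algebraMap ℤ ℚ) := by
    apply dvd_of_companion_aeval_mulVec_eq_zero
    rw [aeval_map_algebraMap, map_sub, map_mul, aeval_X, aeval_C, Matrix.sub_mulVec,
      ← Matrix.mulVec_mulVec, hF]
    ext i
    fin_cases i <;> simp [digitVec]
  have hq : (C c * X ^ 2 + C a * X + C b).map (algebraMap ℤ ℚ) =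
      C (c : ℚ) * (X ^ 2 + C α * X + C β) := by
    simp only [Polynomial.map_add, Polynomial.map_mul, Polynomial.map_pow, Polynomial.map_C,
      Polynomial.map_X, algebraMap_int_eq, Int.coe_castRingHom, ha, hb, C_mul]
    ring
  have hdvd : C c * X ^ 2 + C a * X + C b ∣ X * F - C μ := by
    refine (isPrimitive_of_gcd_eq_one hprim).dvd_of_fraction_map_dvd_fraction_map (K := ℚ) ?_
    rwa [hq, (isUnit_C.mpr (Int.cast_ne_zero.mpr hc).isUnit).mul_left_dvd]
  simpa using eval_dvd (x := 0) hdvd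

theorem eq_of_digitVec_add_companion_mulVec_eq {α β : ℚ} {c a b : ℤ} (hc : c ≠ 0)
    (ha : (a : ℚ) = c * α) (hb : (b : ℚ) = c * β) (hprim : Int.gcd c (Int.gcd a b) = 1)
    {ν ν' : ℤ} (hν₀ : 0 ≤ ν) (hν : ν < |b|) (hν'₀ : 0 ≤ ν') (hν' : ν' < |b|)
    {y y' : Fin 2 → ℚ} (hy : y ∈ intSpan !![0, -β; 1, -α]) (hy' : y' ∈ intSpan !![0, -β; 1, -α])
    (h : digitVec ν + !![0, -β; 1, -α] *ᵥ y = digitVec ν' + !![0, -β; 1, -α] *ᵥ y') :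
    y = y' := by
  obtain ⟨F, hF⟩ := exists_aeval_mulVec_of_mem_companion_intSpan hy
  obtain ⟨F', hF'⟩ := exists_aeval_mulVec_of_mem_companion_intSpan hy'
  have hdiff : !![0, -β; 1, -α] *ᵥ (y - y') = digitVec (ν' - ν) := by
    rw [Matrix.mulVec_sub, sub_eq_iff_eq_add]
    ext i
    have hi := congrFun h i
    fin_cases i <;> simp [digitVec] at hi ⊢ <;> linarith
  have hdvd : b ∣ ν' - ν := by
    refine dvd_of_companion_mulVec_eq_digitVec (F := F - F') hc ha hb hprim ?_
    rwa [map_sub, Matrix.sub_mulVec, ← hF, ← hF']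
  have hνν' : ν' - ν = 0 :=
    Int.eq_zero_of_abs_lt_dvd ((abs_dvd _ _).mpr hdvd)
      (abs_sub_lt_of_nonneg_of_lt hν'₀ hν' hν₀ hν)
  have hdet : (!![0, -β; 1, -α]).det ≠ 0 := by
    intro hdet
    simp only [Matrix.det_fin_two_of] at hdet
    have : (b : ℚ) = 0 := by rw [hb, show β = 0 by linarith, mul_zero]
    rw [Int.cast_eq_zero] at this
    simp only [this, abs_zero] at hν
    omega
  rw [hνν', digitVec] at hdiff
  exact sub_eq_zero.mp (Matrix.eq_zero_of_mulVec_eq_zero hdet (by simpa using hdiff))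

theorem eq_digitVec_add_companion_mulVec_self {α β : ℚ} {c a b : ℤ}
    (ha : (a : ℚ) = c * α) (hb : (b : ℚ) = c * β) (ℓ : ℤ) :
    ![((-(ℓ * (a + c)) : ℤ) : ℚ), ((-(ℓ * c) : ℤ) : ℚ)] =
      digitVec (ℓ * (-a - b - c)) +
        !![0, -β; 1, -α] *ᵥ ![((-(ℓ * (a + c)) : ℤ) : ℚ), ((-(ℓ * c) : ℤ) : ℚ)] := by
  ext i
  fin_cases i <;> simp [digitVec]
  · linear_combination (ℓ : ℚ) * hb
  · linear_combination (ℓ : ℚ) * ha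

theorem stmt7_general (α β : ℚ) (hα1 : 0 < α) (hα2 : α < -β - 1)
    (c a b : ℤ) (hc : 0 < c)
    (ha : (a : ℚ) = (c : ℚ) * α) (hb : (b : ℚ) = (c : ℚ) * β)
    (hprim : Int.gcd c (Int.gcd a b) = 1)
    (A : Matrix (Fin 2) (Fin 2) ℚ) (hA : A = !![0, -β; 1, -α])
    (Φ : (Fin 2 → ℚ) → Fin 2 → ℚ)
    (hΦmem : ∀ x ∈ intSpan A, Φ x ∈ intSpan A)
    (hΦ : ∀ x ∈ intSpan A, ∃ ν : ℤ, 0 ≤ ν ∧ ν ≤ |b| - 1 ∧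
      x = digitVec ν + A.mulVec (Φ x))
    (K : ℤ) (hK2 : K * (-a - b - c) ≤ -b - 1) :
    ∀ ℓ : ℤ, 0 ≤ ℓ → ℓ ≤ K →
      (![((-(ℓ * (a + c)) : ℤ) : ℚ), ((-(ℓ * c) : ℤ) : ℚ)] ∈ intSpan A ∧
        ∃ r : ℕ, 1 ≤ r ∧
          Φ^[r] ![((-(ℓ * (a + c)) : ℤ) : ℚ), ((-(ℓ * c) : ℤ) : ℚ)] =
            ![((-(ℓ * (a + c)) : ℤ) : ℚ), ((-(ℓ * c) : ℤ) : ℚ)]) := by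
  subst hA
  intro ℓ hℓ hℓK
  have hcQ : (0 : ℚ) < c := by exact_mod_cast hc
  have hb_neg : b < 0 := by
    have : (b : ℚ) < 0 := by rw [hb]; nlinarith
    exact_mod_cast this
  have habc : a + b + c < 0 := by
    have : (a + b + c : ℚ) < 0 := by rw [ha, hb]; nlinarith
    exact_mod_cast this
  set x : Fin 2 → ℚ := ![((-(ℓ * (a + c)) : ℤ) : ℚ), ((-(ℓ * c) : ℤ) : ℚ)]
  have hx : x ∈ intSpan !![0, -β; 1, -α] := by
    convert intCast_mem_intSpan _ ![-(ℓ * (a + c)), -(ℓ * c)] using 1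
    ext i
    fin_cases i <;> rfl
  obtain ⟨ν, hν₀, hνb, hΦx⟩ := hΦ x hx
  refine ⟨hx, 1, le_rfl, ?_⟩
  have hdigit : ℓ * (-a - b - c) ≤ K * (-a - b - c) := mul_le_mul_of_nonneg_right hℓK (by omega)
  have habs : |b| = -b := abs_of_neg hb_neg
  exact eq_of_digitVec_add_companion_mulVec_eq hc.ne' ha hb hprim hν₀ (by omega)
    (mul_nonneg hℓ (by omega)) (by omega) (hΦmem x hx) hx
    (hΦx.symm.trans (eq_digitVec_add_companion_mulVec_self ha hb ℓ))

/-- if `0 < α < -β - 1`, then for every `0 ≤ ℓ ≤ K`, where `K` is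
the largest positive integer with `K(-a-b-c) ≤ -b - 1`, the vector
`-ℓ·(a+c, c)ᵀ` is a periodic point of `Φ`. -/
theorem stmt7 (α β : ℚ) (hα1 : 0 < α) (hα2 : α < -β - 1)
    (hirr : Irreducible (X ^ 2 + C α * X + C β : ℚ[X]))
    (hexp : ∀ z : ℂ, z ^ 2 + (α : ℂ) * z + (β : ℂ) = 0 → 1 < ‖z‖)
    (c a b : ℤ) (hc : 0 < c)
    (ha : (a : ℚ) = (c : ℚ) * α) (hb : (b : ℚ) = (c : ℚ) * β)
    (hprim : Int.gcd c (Int.gcd a b) = 1)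
    (A : Matrix (Fin 2) (Fin 2) ℚ) (hA : A = !![0, -β; 1, -α])
    (Φ : (Fin 2 → ℚ) → Fin 2 → ℚ)
    (hΦmem : ∀ x ∈ intSpan A, Φ x ∈ intSpan A)
    (hΦ : ∀ x ∈ intSpan A, ∃ ν : ℤ, 0 ≤ ν ∧ ν ≤ |b| - 1 ∧
      x = digitVec ν + A.mulVec (Φ x))
    (K : ℤ) (hK1 : 1 ≤ K) (hK2 : K * (-a - b - c) ≤ -b - 1)
    (hKmax : ∀ K' : ℤ, 1 ≤ K' → K' * (-a - b - c) ≤ -b - 1 → K' ≤ K) :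
    ∀ ℓ : ℤ, 0 ≤ ℓ → ℓ ≤ K →
      (![((-(ℓ * (a + c)) : ℤ) : ℚ), ((-(ℓ * c) : ℤ) : ℚ)] ∈ intSpan A ∧
        ∃ r : ℕ, 1 ≤ r ∧
          Φ^[r] ![((-(ℓ * (a + c)) : ℤ) : ℚ), ((-(ℓ * c) : ℤ) : ℚ)] =
            ![((-(ℓ * (a + c)) : ℤ) : ℚ), ((-(ℓ * c) : ℤ) : ℚ)]) :=
  stmt7_general α β hα1 hα2 c a b hc ha hb hprim A hA Φ hΦmem hΦ K hK2
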